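/- arXiv:1704.04037 — 4 statements merged into one kernel-verified Lean document; each statement's English description precedes it below -/
import Mathlib

section
/- Let E be a normed real vector space and f : E → E a map satisfying the reverse-filtering contraction condition with constant t ∈ [0,1). Let I* ∈ E, J* = f(I*), and let (Xⁿ) be the reverse-filtering iteration X⁰ = J*, X^{n+1} = Xⁿ + J* - f(Xⁿ). Then the recovery error decays geometrically: for every n ≥ 0, ‖Xⁿ - I*‖ ≤ tⁿ·‖J* - I*‖. -/
/-- Geometric decay of the recovery error of the reverse-filtering iteration:
`‖Xⁿ - I*‖ ≤ tⁿ · ‖J* - I*‖`. -/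
theorem reverse_filtering_error_geometric_decay
    {E : Type*} [NormedAddCommGroup E] [NormedSpace ℝ E]
    (f : E → E) (t : ℝ) (ht0 : 0 ≤ t) (ht1 : t < 1)
    (hf : ∀ x y : E, ‖(x - f x) - (y - f y)‖ ≤ t * ‖x - y‖)
    (Istar Jstar : E) (hJ : Jstar = f Istar)
    (X : ℕ → E) (hX0 : X 0 = Jstar)
    (hX : ∀ n : ℕ, X (n + 1) = X n + Jstar - f (X n)) :
    ∀ n : ℕ, ‖X n - Istar‖ ≤ t ^ n * ‖Jstar - Istar‖ := by
  intro n
  induction n with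
  | zero => simp [hX0]
  | succ n ih =>
    have key : X (n + 1) - Istar = (X n - f (X n)) - (Istar - f Istar) := by
      rw [hX n, hJ]; abel
    calc ‖X (n + 1) - Istar‖ = ‖(X n - f (X n)) - (Istar - f Istar)‖ := by rw [key]
      _ ≤ t * ‖X n - Istar‖ := hf _ _
      _ ≤ t * (t ^ n * ‖Jstar - Istar‖) := by
          exact mul_le_mul_of_nonneg_left ih ht0
      _ = t ^ (n + 1) * ‖Jstar - Istar‖ := by ring
end

section
/- Let E be a normed real vector space and f : E → E a map satisfying the reverse-filtering contraction condition with constant t ∈ [0,1). Let J* ∈ E and let (Xⁿ) be the reverse-filtering iteration X⁰ = J*, X^{n+1} = Xⁿ + J* - f(Xⁿ). Then the data-term residual decays geometrically: for every n ≥ 0, ‖f(Xⁿ) - J*‖ ≤ tⁿ·‖f(J*) - J*‖. -/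
/-- Geometric decay of the data-term residual of the reverse-filtering
iteration: `‖f Xⁿ - J*‖ ≤ tⁿ · ‖f J* - J*‖`. -/
theorem reverse_filtering_data_term_geometric_decay
    {E : Type*} [NormedAddCommGroup E] [NormedSpace ℝ E]
    (f : E → E) (t : ℝ) (ht0 : 0 ≤ t) (ht1 : t < 1)
    (hf : ∀ x y : E, ‖(x - f x) - (y - f y)‖ ≤ t * ‖x - y‖)
    (Jstar : E)
    (X : ℕ → E) (hX0 : X 0 = Jstar)
    (hX : ∀ n : ℕ, X (n + 1) = X n + Jstar - f (X n)) :
    ∀ n : ℕ, ‖f (X n) - Jstar‖ ≤ t ^ n * ‖f Jstar - Jstar‖ := by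
  intro n
  induction n with
  | zero => simp [hX0]
  | succ n ih =>
    have key : ‖f (X (n + 1)) - Jstar‖ ≤ t * ‖f (X n) - Jstar‖ := by
      have h := hf (X (n + 1)) (X n)
      have e1 : (X (n + 1) - f (X (n + 1))) - (X n - f (X n))
          = -(f (X (n + 1)) - Jstar) := by
        rw [hX n]; abel
      have e2 : X (n + 1) - X n = -(f (X n) - Jstar) := by
        rw [hX n]; abel
      rwa [e1, e2, norm_neg, norm_neg] at h
    calc ‖f (X (n + 1)) - Jstar‖ ≤ t * ‖f (X n) - Jstar‖ := key
      _ ≤ t * (t ^ n * ‖f Jstar - Jstar‖) := by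
          exact mul_le_mul_of_nonneg_left ih ht0
      _ = t ^ (n + 1) * ‖f Jstar - Jstar‖ := by ring
end

section
/- Let n ≥ 1 and let k : Fin n → ℝ satisfy 0 < k p ≤ 1 for every p. Let A_k be the multiplication operator on EuclideanSpace ℂ (Fin n) defined by (A_k x) p = (k p) · (x p). Let i* ∈ EuclideanSpace ℂ (Fin n) and J* = A_k(i*). Then the reverse-filtering iteration X⁰ = J*, X^{n+1} = Xⁿ + J* - A_k(Xⁿ) converges to i*; that is, a filter whose Fourier multiplier is real-valued in (0,1] is strictly reversed by fixed-point iteration. -/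
/-- The multiplication (Fourier-multiplier) operator with multiplier `k`. -/
def mulOp (n : ℕ) (k : Fin n → ℂ) (x : EuclideanSpace ℂ (Fin n)) :
    EuclideanSpace ℂ (Fin n) :=
  WithLp.toLp 2 (fun p => k p * x p)

/-! Each step multiplies the error `X m - istar` coordinatewise by `1 - k p`, so its `p`-th
coordinate is `(1 - k p) ^ m * (X 0 p - istar p)`. For `0 < k p ≤ 1` we have `|1 - k p| < 1`,
so every coordinate of the error tends to `0`, and in the finite product `EuclideanSpace`
coordinatewise convergence is convergence. -/

open Filter Topology

theorem PiLp.tendsto_nhds_iff {α ι : Type*} {β : ι → Type*} [∀ i, TopologicalSpace (β i)]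
    {q : ENNReal} {f : α → PiLp q β} {l : Filter α} {x : PiLp q β} :
    Tendsto f l (𝓝 x) ↔ ∀ i, Tendsto (fun a => f a i) l (𝓝 (x i)) := by
  rw [(PiLp.homeomorph q β).isInducing.tendsto_nhds_iff, tendsto_pi_nhds]
  rfl

@[simp]
theorem mulOp_apply (n : ℕ) (k : Fin n → ℂ) (x : EuclideanSpace ℂ (Fin n)) (p : Fin n) :
    mulOp n k x p = k p * x p :=
  rfl

theorem Complex.norm_one_sub_ofReal_lt_one {r : ℝ} (h0 : 0 < r) (h2 : r < 2) :
    ‖1 - (r : ℂ)‖ < 1 := by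
  rw [← Complex.ofReal_one, ← Complex.ofReal_sub, Complex.norm_real, Real.norm_eq_abs, abs_lt]
  constructor <;> linarith

section ReverseIteration

variable {n : ℕ} {k : Fin n → ℂ} {istar : EuclideanSpace ℂ (Fin n)}
  {X : ℕ → EuclideanSpace ℂ (Fin n)}

theorem reverseIteration_sub_eq_pow_mul
    (hX : ∀ m, X (m + 1) = X m + mulOp n k istar - mulOp n k (X m)) (m : ℕ) (p : Fin n) :
    X m p - istar p = (1 - k p) ^ m * (X 0 p - istar p) := by
  induction m with
  | zero => simp
  | succ m ih =>
    have hstep : X (m + 1) p - istar p = (1 - k p) * (X m p - istar p) := by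
      rw [hX m]
      simp only [PiLp.add_apply, PiLp.sub_apply, mulOp_apply]
      ring
    rw [hstep, ih, pow_succ']
    ring

theorem tendsto_reverseIteration_of_norm_one_sub_lt_one (hk : ∀ p, ‖1 - k p‖ < 1)
    (hX : ∀ m, X (m + 1) = X m + mulOp n k istar - mulOp n k (X m)) :
    Tendsto X atTop (𝓝 istar) := by
  rw [PiLp.tendsto_nhds_iff]
  intro p
  have herr : Tendsto (fun m => (1 - k p) ^ m * (X 0 p - istar p)) atTop (𝓝 0) := by
    simpa using (tendsto_pow_atTop_nhds_zero_of_norm_lt_one (hk p)).mul_const (X 0 p - istar p)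
  rw [← tendsto_sub_nhds_zero_iff]
  exact herr.congr fun m => (reverseIteration_sub_eq_pow_mul hX m p).symm

end ReverseIteration

theorem multiplier_operator_reverse_iteration_converges_general
    (n : ℕ) (k : Fin n → ℝ)
    (hk : ∀ p : Fin n, 0 < k p ∧ k p ≤ 1)
    (istar Jstar : EuclideanSpace ℂ (Fin n))
    (hJ : Jstar = mulOp n (fun p => (k p : ℂ)) istar)
    (X : ℕ → EuclideanSpace ℂ (Fin n))
    (hX : ∀ m : ℕ, X (m + 1) = X m + Jstar - mulOp n (fun p => (k p : ℂ)) (X m)) :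
    Filter.Tendsto X Filter.atTop (nhds istar) := by
  subst hJ
  refine tendsto_reverseIteration_of_norm_one_sub_lt_one (fun p => ?_) hX
  exact Complex.norm_one_sub_ofReal_lt_one (hk p).1 (by linarith [(hk p).2])

/-- A filter whose Fourier multiplier is real-valued in `(0,1]` is strictly
reversed by the fixed-point (reverse-filtering) iteration. -/
theorem multiplier_operator_reverse_iteration_converges
    (n : ℕ) (hn : 0 < n) (k : Fin n → ℝ)
    (hk : ∀ p : Fin n, 0 < k p ∧ k p ≤ 1)
    (istar Jstar : EuclideanSpace ℂ (Fin n))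
    (hJ : Jstar = mulOp n (fun p => (k p : ℂ)) istar)
    (X : ℕ → EuclideanSpace ℂ (Fin n)) (hX0 : X 0 = Jstar)
    (hX : ∀ m : ℕ, X (m + 1) = X m + Jstar - mulOp n (fun p => (k p : ℂ)) (X m)) :
    Filter.Tendsto X Filter.atTop (nhds istar) :=
  multiplier_operator_reverse_iteration_converges_general n k hk istar Jstar hJ X hX
end

section
/- Let n ≥ 1, let k : Fin n → ℝ satisfy 0 < k p ≤ 1 for every p, let A_k be the multiplication operator on EuclideanSpace ℂ (Fin n) defined by (A_k x) p = (k p) · (x p), and let λ ≥ 0. Define the unsharp-mask filter f(x) = x + λ·(x - A_k x). Then for every x, ‖x - f(x)‖ ≤ λ·(1 - min_p k p)·‖x‖; consequently, if λ·(1 - min_p k p) < 1, then f satisfies the reverse-filtering contraction condition with constant t = λ·(1 - min_p k p) ∈ [0,1), and for any i* with J* = f(i*) the reverse-filtering iteration X⁰ = J*, X^{n+1} = Xⁿ + J* - f(Xⁿ) converges to i*. -/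
open Filter Topology

theorem mulOp_sub (n : ℕ) (c : Fin n → ℂ) (x y : EuclideanSpace ℂ (Fin n)) :
    mulOp n c x - mulOp n c y = mulOp n c (x - y) := by
  ext p
  simp only [mulOp, PiLp.sub_apply]
  ring

theorem norm_mulOp_le {n : ℕ} {c : Fin n → ℂ} {C : ℝ} (hC : 0 ≤ C) (hc : ∀ p, ‖c p‖ ≤ C)
    (x : EuclideanSpace ℂ (Fin n)) : ‖mulOp n c x‖ ≤ C * ‖x‖ := by
  have hsq : ‖mulOp n c x‖ ^ 2 ≤ (C * ‖x‖) ^ 2 := by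
    rw [mul_pow, EuclideanSpace.norm_sq_eq, EuclideanSpace.norm_sq_eq, Finset.mul_sum]
    refine Finset.sum_le_sum fun p _ => ?_
    rw [mulOp, norm_mul, mul_pow]
    gcongr
    exact hc p
  exact (sq_le_sq₀ (norm_nonneg _) (by positivity)).mp hsq

theorem sub_unsharpMask_eq_mulOp {n : ℕ} {k : Fin n → ℝ} {lam : ℝ}
    {f : EuclideanSpace ℂ (Fin n) → EuclideanSpace ℂ (Fin n)}
    (hf : ∀ x, f x = x + lam • (x - mulOp n (fun p => (k p : ℂ)) x))
    (x : EuclideanSpace ℂ (Fin n)) :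
    x - f x = mulOp n (fun p => ((-(lam * (1 - k p)) : ℝ) : ℂ)) x := by
  ext p
  simp only [hf, mulOp, PiLp.sub_apply, PiLp.add_apply, PiLp.smul_apply, Complex.real_smul]
  push_cast
  ring

theorem tendsto_reverseFiltering {E : Type*} [SeminormedAddCommGroup E] {f : E → E} {t : ℝ}
    (ht₀ : 0 ≤ t) (ht₁ : t < 1) (hf : ∀ x y, ‖(x - f x) - (y - f y)‖ ≤ t * ‖x - y‖)
    {istar : E} {X : ℕ → E} (hX : ∀ m, X (m + 1) = X m + f istar - f (X m)) :
    Tendsto X atTop (𝓝 istar) := by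
  have hstep : ∀ m, ‖X (m + 1) - istar‖ ≤ t * ‖X m - istar‖ := fun m => by
    have : X (m + 1) - istar = (X m - f (X m)) - (istar - f istar) := by rw [hX]; abel
    exact this ▸ hf _ _
  have hgeom : ∀ m, ‖X m - istar‖ ≤ t ^ m * ‖X 0 - istar‖ := by
    intro m
    induction m with
    | zero => simp
    | succ m ih =>
      calc ‖X (m + 1) - istar‖ ≤ t * (t ^ m * ‖X 0 - istar‖) :=
            (hstep m).trans (mul_le_mul_of_nonneg_left ih ht₀)
        _ = t ^ (m + 1) * ‖X 0 - istar‖ := by ring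
  have hlim : Tendsto (fun m => t ^ m * ‖X 0 - istar‖) atTop (𝓝 0) := by
    simpa using (tendsto_pow_atTop_nhds_zero_of_lt_one ht₀ ht₁).mul_const ‖X 0 - istar‖
  exact tendsto_iff_norm_sub_tendsto_zero.mpr (squeeze_zero (fun _ => norm_nonneg _) hgeom hlim)

/-- The unsharp-mask filter `f x = x + λ·(x - A_k x)` built from a smoothing
multiplier `k` with values in `(0,1]` satisfies
`‖x - f x‖ ≤ λ·(1 - min_p k p)·‖x‖`; hence if `λ·(1 - min_p k p) < 1` it
satisfies the reverse-filtering contraction condition with that constant, and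
the reverse-filtering iteration converges to the true input. -/
theorem unsharp_mask_reverse_filtering
    (n : ℕ) (hn : 0 < n) (k : Fin n → ℝ)
    (hk : ∀ p : Fin n, 0 < k p ∧ k p ≤ 1)
    (lam : ℝ) (hlam : 0 ≤ lam)
    (f : EuclideanSpace ℂ (Fin n) → EuclideanSpace ℂ (Fin n))
    (hf : ∀ x, f x = x + lam • (x - mulOp n (fun p => (k p : ℂ)) x)) :
    (∀ x : EuclideanSpace ℂ (Fin n),
        ‖x - f x‖ ≤
          lam * (1 - Finset.univ.inf' (Finset.univ_nonempty_iff.mpr ⟨⟨0, hn⟩⟩) k) * ‖x‖) ∧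
      (lam * (1 - Finset.univ.inf' (Finset.univ_nonempty_iff.mpr ⟨⟨0, hn⟩⟩) k) < 1 →
        (0 ≤ lam * (1 - Finset.univ.inf' (Finset.univ_nonempty_iff.mpr ⟨⟨0, hn⟩⟩) k) ∧
          (∀ x y : EuclideanSpace ℂ (Fin n),
            ‖(x - f x) - (y - f y)‖ ≤
              lam * (1 - Finset.univ.inf' (Finset.univ_nonempty_iff.mpr ⟨⟨0, hn⟩⟩) k) *
                ‖x - y‖) ∧
          ∀ (istar Jstar : EuclideanSpace ℂ (Fin n)), Jstar = f istar →
            ∀ X : ℕ → EuclideanSpace ℂ (Fin n), X 0 = Jstar →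
              (∀ m : ℕ, X (m + 1) = X m + Jstar - f (X m)) →
                Filter.Tendsto X Filter.atTop (nhds istar))) := by
  set kmin := Finset.univ.inf' (Finset.univ_nonempty_iff.mpr ⟨⟨0, hn⟩⟩) k
  have hkmin : ∀ p, kmin ≤ k p := fun p => Finset.inf'_le _ (Finset.mem_univ p)
  have ht₀ : 0 ≤ lam * (1 - kmin) :=
    mul_nonneg hlam (sub_nonneg.mpr ((hkmin ⟨0, hn⟩).trans (hk ⟨0, hn⟩).2))
  have hcoeff : ∀ p, ‖(((-(lam * (1 - k p))) : ℝ) : ℂ)‖ ≤ lam * (1 - kmin) := fun p => by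
    rw [Complex.norm_real, norm_neg, Real.norm_of_nonneg
      (mul_nonneg hlam (sub_nonneg.mpr (hk p).2))]
    exact mul_le_mul_of_nonneg_left (by linarith [hkmin p]) hlam
  have hcontr : ∀ x y : EuclideanSpace ℂ (Fin n),
      ‖(x - f x) - (y - f y)‖ ≤ lam * (1 - kmin) * ‖x - y‖ := fun x y => by
    rw [sub_unsharpMask_eq_mulOp hf, sub_unsharpMask_eq_mulOp hf, mulOp_sub]
    exact norm_mulOp_le ht₀ hcoeff _
  refine ⟨fun x => ?_, fun ht₁ => ⟨ht₀, hcontr, ?_⟩⟩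
  · exact sub_unsharpMask_eq_mulOp hf x ▸ norm_mulOp_le ht₀ hcoeff x
  · rintro istar _ rfl X - hX
    exact tendsto_reverseFiltering ht₀ ht₁ hcontr hX
end
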